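/- Let f be a bn-independent broadcast on a graph G with |V_f^+| ≥ 2, where V_f^+ = {v : f(v) > 0}. Then f is maximal bn-independent if and only if each component of G − U_f^E contains at least two broadcasting vertices, where U_f^E is the set of edges not covered by f. -/

import Mathlib

/-!
A bn-independent broadcast `f` is maximal exactly when (a) every vertex hears `f` and (b) every
broadcasting vertex `v` shares a hearer with another broadcasting vertex. If a vertex `w` hears
nothing, `f` can be raised to `1` at `w`; if `v` shares no hearer, `f` can be raised to `f v + 1`
at `v`; both raises keep bn-independence. Conversely, under (a) and (b) raising any value makes
some vertex hear two broadcasters strictly inside one ball.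

A vertex hearing `x` is joined to `x` by covered edges along a geodesic, so (a) and (b) give two
broadcasting vertices in every component of `G - U_f^E`. Conversely, a vertex that hears nothing
is isolated in `G - U_f^E`, and if `v` shares no hearer, no covered edge leaves the ball
`N_f(v)`, which then contains no other broadcasting vertex.
-/

open SimpleGraph Finset
open scoped Classical

noncomputable section

/-- Eccentricity of a vertex. -/
def gecc {V : Type*} (G : SimpleGraph V) [Fintype V] (v : V) : ℕ :=
  Finset.univ.sup fun u => G.dist v u

/-- A broadcast: `f v ≤ e(v)` for all `v`. -/
def IsBroadcast {V : Type*} (G : SimpleGraph V) [Fintype V] (f : V → ℕ) : Prop :=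
  ∀ v, f v ≤ gecc G v

/-- `u` hears `f` from `v`. -/
def Hears {V : Type*} (G : SimpleGraph V) (f : V → ℕ) (u v : V) : Prop :=
  0 < f v ∧ G.dist u v ≤ f v

/-- Boundary independent broadcast: a vertex hearing two or more broadcasting
vertices lies in the boundary of each. -/
def BnIndep {V : Type*} (G : SimpleGraph V) [Fintype V] (f : V → ℕ) : Prop :=
  IsBroadcast G f ∧
    ∀ w v₁ v₂, v₁ ≠ v₂ → Hears G f w v₁ → Hears G f w v₂ → G.dist w v₁ = f v₁

/-- Weight of a broadcast. -/
def bweight {V : Type*} [Fintype V] (f : V → ℕ) : ℕ := ∑ v, f v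

/-- The boundary independence number. -/
def alphaBn {V : Type*} (G : SimpleGraph V) [Fintype V] : ℕ :=
  sSup {w | ∃ f, BnIndep G f ∧ bweight f = w}

/-- Set of branch vertices (degree at least 3). -/
def branchSet {V : Type*} (G : SimpleGraph V) [Fintype V] : Finset V :=
  Finset.univ.filter fun v => 3 ≤ G.degree v

/-- `l` is a leaf joined to `v` by an endpath (all internal vertices of degree 2). -/
def IsEndpathTo {V : Type*} (G : SimpleGraph V) [Fintype V] (v l : V) : Prop :=
  G.degree l = 1 ∧ ∃ p : G.Walk v l, p.IsPath ∧
    ∀ u ∈ p.support, u ≠ v → u ≠ l → G.degree u = 2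

/-- Leaf set `L(v)` of a vertex `v`. -/
def leafSet {V : Type*} (G : SimpleGraph V) [Fintype V] (v : V) : Finset V :=
  Finset.univ.filter fun l => IsEndpathTo G v l

/-- `R(T)`: branch vertices with at most one leaf in their leaf set. -/
def rset {V : Type*} (G : SimpleGraph V) [Fintype V] : Finset V :=
  (branchSet G).filter fun v => (leafSet G v).card ≤ 1

/-- Edge `uv` is covered by broadcasting vertex `x`. -/
def Covers {V : Type*} (G : SimpleGraph V) (f : V → ℕ) (x u v : V) : Prop :=
  0 < f x ∧ G.Adj u v ∧ G.dist u x ≤ f x ∧ G.dist v x ≤ f x ∧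
    (G.dist u x < f x ∨ G.dist v x < f x)

/-- The graph `G - U_f^E` obtained by deleting all `f`-uncovered edges. -/
def coveredSubgraph {V : Type*} (G : SimpleGraph V) (f : V → ℕ) : SimpleGraph V where
  Adj u v := G.Adj u v ∧ ∃ x, Covers G f x u v
  symm := ⟨by
    rintro u v ⟨h, x, h1, h2, h3, h4, h5⟩
    exact ⟨h.symm, x, h1, h2.symm, h4, h3, h5.symm⟩⟩
  loopless := ⟨by rintro u ⟨h, -⟩; exact G.loopless.irrefl u h⟩

/-- `f` is a maximal bn-independent broadcast. -/
def MaximalBn {V : Type*} (G : SimpleGraph V) [Fintype V] (f : V → ℕ) : Prop :=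
  BnIndep G f ∧ ∀ g, BnIndep G g → (∀ v, f v ≤ g v) → g = f

/-- The `f`-private boundary of `v`: vertices of `N_f(v)` not dominated once the
broadcast strength of `v` is lowered by one. -/
def privBoundary {V : Type*} (G : SimpleGraph V) (f : V → ℕ) (v : V) : Set V :=
  {u | G.dist u v ≤ f v ∧ ∀ x, ¬ Hears G (Function.update f v (f v - 1)) u x}

/-- The branch representation: branch vertices adjacent iff the path between them
contains no other branch vertex. -/
def branchRep {V : Type*} (G : SimpleGraph V) [Fintype V] : SimpleGraph V where
  Adj b₁ b₂ := b₁ ≠ b₂ ∧ 3 ≤ G.degree b₁ ∧ 3 ≤ G.degree b₂ ∧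
    ∀ p : G.Walk b₁ b₂, p.IsPath → ∀ u ∈ p.support, 3 ≤ G.degree u → u = b₁ ∨ u = b₂
  symm := ⟨by
    rintro a b ⟨hab, ha, hb, h⟩
    refine ⟨hab.symm, hb, ha, fun p hp u hu hdeg => ?_⟩
    have hu' : u ∈ p.reverse.support := by
      rw [SimpleGraph.Walk.support_reverse]; exact List.mem_reverse.mpr hu
    exact (h p.reverse hp.reverse u hu' hdeg).symm⟩
  loopless := ⟨by rintro v ⟨h, -⟩; exact h rfl⟩

/-- Hearing independent broadcast. -/
def HIndep {V : Type*} (G : SimpleGraph V) [Fintype V] (f : V → ℕ) : Prop :=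
  IsBroadcast G f ∧ ∀ u v, u ≠ v → 0 < f u → 0 < f v → f v < G.dist u v

/-- The hearing independence number. -/
def alphaH {V : Type*} (G : SimpleGraph V) [Fintype V] : ℕ :=
  sSup {w | ∃ f, HIndep G f ∧ bweight f = w}

/-- Diameter. -/
def gdiam {V : Type*} (G : SimpleGraph V) [Fintype V] : ℕ :=
  Finset.univ.sup fun v => gecc G v

namespace SimpleGraph

variable {V : Type*} {G : SimpleGraph V}

lemma exists_adj_dist_eq_of_dist_eq_add_one {z v : V} {m : ℕ} (h : G.dist z v = m + 1) :
    ∃ z', G.Adj z z' ∧ G.dist z' v = m := by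
  obtain ⟨p, hp⟩ := exists_walk_of_dist_ne_zero (by omega : G.dist z v ≠ 0)
  cases p with
  | nil => simp at h
  | @cons _ z' _ hadj q =>
    refine ⟨z', hadj, le_antisymm ?_ ?_⟩
    · have := G.dist_le q
      rw [Walk.length_cons] at hp
      omega
    · have := hadj.reachable.dist_triangle_left v
      rw [dist_eq_one_iff_adj.mpr hadj] at this
      omega

end SimpleGraph

section Broadcast

variable {V : Type*} {G : SimpleGraph V} {f : V → ℕ}

def IsDominating (G : SimpleGraph V) (f : V → ℕ) : Prop :=
  ∀ w, ∃ x, Hears G f w x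

def HasOverlap (G : SimpleGraph V) (f : V → ℕ) (v : V) : Prop :=
  ∃ w y, y ≠ v ∧ Hears G f w v ∧ Hears G f w y

def TwoBroadcastersPerComponent (G : SimpleGraph V) (f : V → ℕ) : Prop :=
  ∀ c : (coveredSubgraph G f).ConnectedComponent,
    ∃ u v : V, u ≠ v ∧ 0 < f u ∧ 0 < f v ∧
      (coveredSubgraph G f).connectedComponentMk u = c ∧
      (coveredSubgraph G f).connectedComponentMk v = c

lemma hears_self {v : V} (hv : 0 < f v) : Hears G f v v :=
  ⟨hv, by rw [G.dist_self]; omega⟩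

lemma Hears.mono {g : V → ℕ} (hle : ∀ v, f v ≤ g v) {u v : V} (h : Hears G f u v) :
    Hears G g u v :=
  ⟨h.1.trans_le (hle v), h.2.trans (hle v)⟩

lemma dist_le_gecc [Fintype V] (G : SimpleGraph V) (u v : V) : G.dist u v ≤ gecc G u :=
  Finset.le_sup (Finset.mem_univ v)

lemma BnIndep.update [Fintype V] (hf : BnIndep G f) {v : V} {k : ℕ} (hk : k ≤ gecc G v)
    (hboundary : ∀ z y, y ≠ v → Hears G f z y → 0 < k → G.dist z v ≤ k →
      G.dist z v = k ∧ G.dist z y = f y) :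
    BnIndep G (Function.update f v k) := by
  refine ⟨fun u => ?_, fun z v₁ v₂ hne h₁ h₂ => ?_⟩
  · rcases eq_or_ne u v with rfl | hu
    · simpa using hk
    · simpa [hu] using hf.1 u
  · rcases eq_or_ne v₁ v with rfl | hv₁
    · simp only [Hears, Function.update_self, Function.update_of_ne hne.symm] at h₁ h₂ ⊢
      exact (hboundary z v₂ hne.symm h₂ h₁.1 h₁.2).1
    rcases eq_or_ne v₂ v with rfl | hv₂
    · simp only [Hears, Function.update_self, Function.update_of_ne hv₁] at h₁ h₂ ⊢
      exact (hboundary z v₁ hv₁ h₁ h₂.1 h₂.2).2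
    · simp only [Hears, Function.update_of_ne hv₁, Function.update_of_ne hv₂] at h₁ h₂ ⊢
      exact hf.2 z v₁ v₂ hne h₁ h₂

lemma maximalBn_of_isDominating_of_hasOverlap [Fintype V] (hf : BnIndep G f)
    (hdom : IsDominating G f) (hov : ∀ v, 0 < f v → HasOverlap G f v) : MaximalBn G f := by
  refine ⟨hf, fun g hg hle => funext fun v => ?_⟩
  by_contra hne
  have hlt : f v < g v := (hle v).lt_of_ne (Ne.symm hne)
  rcases Nat.eq_zero_or_pos (f v) with hv | hv
  · obtain ⟨x, hvx⟩ := hdom v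
    have hxv : v ≠ x := by rintro rfl; exact hvx.1.ne' hv
    have := hg.2 v v x hxv (hears_self (by omega)) (hvx.mono hle)
    rw [G.dist_self] at this
    omega
  · obtain ⟨w, y, hyv, hwv, hwy⟩ := hov v hv
    have hf_eq := hf.2 w v y hyv.symm hwv hwy
    have hg_eq := hg.2 w v y hyv.symm (hwv.mono hle) (hwy.mono hle)
    omega

lemma MaximalBn.isDominating [Fintype V] (hG : G.Connected) (hmax : MaximalBn G f)
    (hne : ∃ x, 0 < f x) : IsDominating G f := by
  unfold IsDominating
  by_contra! hsilent
  obtain ⟨w, hw⟩ := hsilent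
  have hfar : ∀ x, 0 < f x → f x < G.dist w x := fun x hx => by
    by_contra! h
    exact hw x ⟨hx, h⟩
  have hfw : f w = 0 := by
    by_contra h
    exact hw w (hears_self (Nat.pos_of_ne_zero h))
  have hg : BnIndep G (Function.update f w 1) := by
    refine hmax.1.update ?_ fun z y _ hzy _ hzw => ?_
    · obtain ⟨x, hx⟩ := hne
      have := hfar x hx
      have := dist_le_gecc G w x
      omega
    · have htri := hG.dist_triangle (u := w) (v := z) (w := y)
      have := hfar y hzy.1
      have := hzy.2
      rw [G.dist_comm (u := w) (v := z)] at htri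
      omega
  have := congrFun (hmax.2 _ hg fun v => by
    rcases eq_or_ne v w with rfl | hv <;> simp [*]) w
  simp [hfw] at this

lemma MaximalBn.hasOverlap [Fintype V] (hmax : MaximalBn G f) {v y₀ : V} (hv : 0 < f v)
    (hy₀ : 0 < f y₀) (hy₀v : y₀ ≠ v) : HasOverlap G f v := by
  by_contra hno
  have hsep : ∀ z y, y ≠ v → Hears G f z y → ¬ G.dist z v ≤ f v :=
    fun z y hyv hzy hzv => hno ⟨z, y, hyv, ⟨hv, hzv⟩, hzy⟩
  have hg : BnIndep G (Function.update f v (f v + 1)) := by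
    refine hmax.1.update ?_ fun z y hyv hzy _ hzv => ?_
    · have := hsep y₀ y₀ hy₀v (hears_self hy₀)
      have := dist_le_gecc G v y₀
      rw [G.dist_comm] at this
      omega
    · have hzv' : G.dist z v = f v + 1 := by
        have := hsep z y hyv hzy
        omega
      refine ⟨hzv', le_antisymm hzy.2 ?_⟩
      by_contra! hlt
      obtain ⟨z', hadj, hz'v⟩ := SimpleGraph.exists_adj_dist_eq_of_dist_eq_add_one hzv'
      have htri := hadj.symm.reachable.dist_triangle_left (u := z') y
      rw [SimpleGraph.dist_eq_one_iff_adj.mpr hadj.symm] at htri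
      exact hsep z' y hyv ⟨hzy.1, by omega⟩ hz'v.le
  have := congrFun (hmax.2 _ hg fun u => by
    rcases eq_or_ne u v with rfl | hu <;> simp [*]) v
  simp at this

lemma reachable_coveredSubgraph_of_hears (hG : G.Connected) {w x : V} (h : Hears G f w x) :
    (coveredSubgraph G f).Reachable w x := by
  obtain ⟨hx, hwx⟩ := h
  induction hd : G.dist w x generalizing w with
  | zero =>
    rw [hG.dist_eq_zero_iff] at hd
    rw [hd]
  | succ m ih =>
    obtain ⟨w', hadj, hw'⟩ := SimpleGraph.exists_adj_dist_eq_of_dist_eq_add_one hd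
    have hcov : (coveredSubgraph G f).Adj w w' :=
      ⟨hadj, x, hx, hadj, by omega, by omega, Or.inr (by omega)⟩
    exact hcov.reachable.trans (ih (by omega) hw')

lemma twoBroadcastersPerComponent_of_isDominating_of_hasOverlap (hG : G.Connected)
    (hdom : IsDominating G f) (hov : ∀ v, 0 < f v → HasOverlap G f v) :
    TwoBroadcastersPerComponent G f := by
  intro c
  obtain ⟨w, rfl⟩ := c.exists_rep
  obtain ⟨x, hwx⟩ := hdom w
  obtain ⟨z, y, hyx, hzx, hzy⟩ := hov x hwx.1
  have hxw := (reachable_coveredSubgraph_of_hears hG hwx).symm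
  have hyx' := (reachable_coveredSubgraph_of_hears hG hzy).symm.trans
    (reachable_coveredSubgraph_of_hears hG hzx)
  exact ⟨x, y, hyx.symm, hwx.1, hzy.1, ConnectedComponent.sound hxw,
    ConnectedComponent.sound (hyx'.trans hxw)⟩

lemma TwoBroadcastersPerComponent.isDominating (h : TwoBroadcastersPerComponent G f) :
    IsDominating G f := by
  intro w
  by_contra! hw
  obtain ⟨u, v, huv, hu, hv, hcu, hcv⟩ := h ((coveredSubgraph G f).connectedComponentMk w)
  have hwu : w ≠ u := by
    rintro rfl
    exact hw w (hears_self hu)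
  obtain ⟨p⟩ := (ConnectedComponent.exact hcu).symm
  cases p with
  | nil => exact hwu rfl
  | cons hcov _ =>
    obtain ⟨-, x, hx, -, hwx, -⟩ := hcov
    exact hw x ⟨hx, hwx⟩

lemma dist_le_of_walk_coveredSubgraph {v : V} (hv : 0 < f v) (hno : ¬ HasOverlap G f v)
    {a b : V} (p : (coveredSubgraph G f).Walk a b) (ha : G.dist a v ≤ f v) :
    G.dist b v ≤ f v := by
  induction p with
  | nil => exact ha
  | cons hcov _ ih =>
    obtain ⟨-, x, hx, -, hax, hcx, -⟩ := hcov
    refine ih ?_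
    rcases eq_or_ne x v with rfl | hxv
    · exact hcx
    · exact absurd ⟨_, x, hxv, ⟨hv, ha⟩, ⟨hx, hax⟩⟩ hno

lemma TwoBroadcastersPerComponent.hasOverlap (h : TwoBroadcastersPerComponent G f) {v : V}
    (hv : 0 < f v) : HasOverlap G f v := by
  by_contra hno
  obtain ⟨u₁, u₂, hu, hu₁, hu₂, hc₁, hc₂⟩ :=
    h ((coveredSubgraph G f).connectedComponentMk v)
  obtain ⟨y, hyv, hy, hcy⟩ : ∃ y, y ≠ v ∧ 0 < f y ∧
      (coveredSubgraph G f).connectedComponentMk y =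
        (coveredSubgraph G f).connectedComponentMk v := by
    rcases eq_or_ne u₁ v with rfl | hu₁v
    · exact ⟨u₂, hu.symm, hu₂, hc₂⟩
    · exact ⟨u₁, hu₁v, hu₁, hc₁⟩
  obtain ⟨p⟩ := (ConnectedComponent.exact hcy).symm
  have hyv_dist := dist_le_of_walk_coveredSubgraph hv hno p (by rw [G.dist_self]; omega)
  exact hno ⟨y, y, hyv, ⟨hv, hyv_dist⟩, hears_self hy⟩

end Broadcast

/-- A bn-independent broadcast with at least two broadcasting vertices is maximal
bn-independent iff each component of `G - U_f^E` contains at least two broadcasting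
vertices. -/
theorem stmt1 {V : Type*} [Fintype V] (G : SimpleGraph V) (hG : G.Connected)
    (f : V → ℕ) (hf : BnIndep G f)
    (h2 : 2 ≤ (Finset.univ.filter fun v => 0 < f v).card) :
    MaximalBn G f ↔
      ∀ c : (coveredSubgraph G f).ConnectedComponent,
        ∃ u v : V, u ≠ v ∧ 0 < f u ∧ 0 < f v ∧
          (coveredSubgraph G f).connectedComponentMk u = c ∧
          (coveredSubgraph G f).connectedComponentMk v = c := by
  have hother : ∀ v, ∃ y, y ≠ v ∧ 0 < f y := fun v => by
    obtain ⟨y, hy, hyv⟩ := Finset.exists_mem_ne h2 v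
    exact ⟨y, hyv, (Finset.mem_filter.mp hy).2⟩
  constructor
  · intro hmax
    obtain ⟨x, hx⟩ : (Finset.univ.filter fun v => 0 < f v).Nonempty :=
      Finset.card_pos.mp (by omega)
    refine twoBroadcastersPerComponent_of_isDominating_of_hasOverlap hG
      (hmax.isDominating hG ⟨x, (Finset.mem_filter.mp hx).2⟩) fun v hv => ?_
    obtain ⟨y, hyv, hy⟩ := hother v
    exact hmax.hasOverlap hv hy hyv
  · rintro (h : TwoBroadcastersPerComponent G f)
    exact maximalBn_of_isDominating_of_hasOverlap hf h.isDominating fun v hv => h.hasOverlap hv
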